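/- Let L ≥ 0 be a random variable with finite variance and r > 0 a constant, and set q = E[L]. Then 0 ≤ log(1 + q/(nr)) − E[log(1 + L/(nr))] ≤ SD(L)·SD(1/(nr + L)), for any n ≥ 1. -/

import Mathlib

/-!
Write `c = n r`. Both bounds come from the two tangent-line estimates of the logarithm: for
`x, y ≥ 0`,
`(y - x) / (c + y) ≤ log (1 + y / c) - log (1 + x / c) ≤ (y - x) / (c + x)`.
Taking `y = E[L]` and `x = L` and integrating, the lower bound has mean zero, while the upper bound
has mean `-cov(L, (c + L)⁻¹)`, which Cauchy–Schwarz bounds by `SD(L) · SD((c + L)⁻¹)`.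
-/

open MeasureTheory ProbabilityTheory Real

section CauchySchwarz

variable {α : Type*} [MeasurableSpace α] {μ : Measure α}

theorem MeasureTheory.MemLp.inner_toLp_eq_integral_mul {f g : α → ℝ} (hf : MemLp f 2 μ)
    (hg : MemLp g 2 μ) :
    inner ℝ (hf.toLp f) (hg.toLp g) = ∫ a, f a * g a ∂μ := by
  rw [L2.inner_def]
  refine integral_congr_ae ?_
  filter_upwards [hf.coeFn_toLp, hg.coeFn_toLp] with a hfa hga
  simp [hfa, hga, mul_comm]

theorem abs_integral_mul_le_sqrt_integral_sq_mul {f g : α → ℝ} (hf : MemLp f 2 μ)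
    (hg : MemLp g 2 μ) :
    |∫ a, f a * g a ∂μ| ≤ √(∫ a, f a ^ 2 ∂μ) * √(∫ a, g a ^ 2 ∂μ) := by
  have norm_toLp {u : α → ℝ} (hu : MemLp u 2 μ) : ‖hu.toLp u‖ = √(∫ a, u a ^ 2 ∂μ) := by
    simp_rw [norm_eq_sqrt_real_inner, hu.inner_toLp_eq_integral_mul hu, sq]
  rw [← hf.inner_toLp_eq_integral_mul hg, ← norm_toLp hf, ← norm_toLp hg]
  exact abs_real_inner_le_norm _ _

theorem abs_covariance_le_sqrt_variance_mul [IsFiniteMeasure μ] {X Y : α → ℝ} (hX : MemLp X 2 μ)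
    (hY : MemLp Y 2 μ) :
    |cov[X, Y; μ]| ≤ √(Var[X; μ]) * √(Var[Y; μ]) := by
  rw [covariance, variance_eq_integral hX.aemeasurable, variance_eq_integral hY.aemeasurable]
  exact abs_integral_mul_le_sqrt_integral_sq_mul (hX.sub (memLp_const _)) (hY.sub (memLp_const _))

end CauchySchwarz

theorem Real.log_one_add_div_sub_log_le {c x y : ℝ} (hc : 0 < c) (hx : 0 < c + x)
    (hy : 0 < c + y) :
    log (1 + y / c) - log (1 + x / c) ≤ (y - x) / (c + x) := by
  have hlog : log (1 + y / c) - log (1 + x / c) = log ((c + y) / (c + x)) := by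
    rw [one_add_div hc.ne', one_add_div hc.ne', log_div hy.ne' hc.ne', log_div hx.ne' hc.ne',
      sub_sub_sub_cancel_right, log_div hy.ne' hx.ne']
  have hratio : (c + y) / (c + x) - 1 = (y - x) / (c + x) := by
    field_simp
    ring
  rw [hlog, ← hratio]
  exact log_le_sub_one_of_pos (by positivity)

section LogGap

variable {Ω : Type*} [MeasurableSpace Ω] {μ : Measure Ω} {X : Ω → ℝ} {c : ℝ}

theorem integrable_log_one_add_div (hc : 0 < c) (hX0 : ∀ᵐ ω ∂μ, 0 ≤ X ω) (hX : Integrable X μ) :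
    Integrable (fun ω => log (1 + X ω / c)) μ := by
  have hmeas : AEStronglyMeasurable (fun ω => log (1 + X ω / c)) μ :=
    (measurable_log.comp_aemeasurable
      ((hX.aemeasurable.div_const c).const_add 1)).aestronglyMeasurable
  refine (hX.div_const c).mono' hmeas ?_
  filter_upwards [hX0] with ω hω
  have hle := log_one_add_div_sub_log_le hc (x := 0) (by linarith) (by linarith)
  rw [norm_of_nonneg (log_nonneg (by have := div_nonneg hω hc.le; linarith))]
  simpa using hle

variable [IsProbabilityMeasure μ]

theorem integral_log_one_add_div_le (hc : 0 < c) (hX0 : ∀ᵐ ω ∂μ, 0 ≤ X ω) (hX : Integrable X μ) :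
    ∫ ω, log (1 + X ω / c) ∂μ ≤ log (1 + μ[X] / c) := by
  have hq : 0 ≤ μ[X] := integral_nonneg_of_ae hX0
  have tangent : ∀ᵐ ω ∂μ, log (1 + X ω / c) ≤ log (1 + μ[X] / c) + (X ω - μ[X]) / (c + μ[X]) := by
    filter_upwards [hX0] with ω hω
    have := log_one_add_div_sub_log_le hc (x := μ[X]) (y := X ω) (by linarith) (by linarith)
    linarith
  have hcentered : Integrable (fun ω => (X ω - μ[X]) / (c + μ[X])) μ :=
    (hX.sub (integrable_const _)).div_const _
  calc ∫ ω, log (1 + X ω / c) ∂μ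
      ≤ ∫ ω, (log (1 + μ[X] / c) + (X ω - μ[X]) / (c + μ[X])) ∂μ :=
        integral_mono_ae (integrable_log_one_add_div hc hX0 hX)
          ((integrable_const _).add hcentered) tangent
    _ = log (1 + μ[X] / c) := by
        rw [integral_add (integrable_const _) hcentered,
          integral_div, integral_sub hX (integrable_const _)]
        simp

theorem log_one_add_div_sub_integral_le (hc : 0 < c) (hX0 : ∀ᵐ ω ∂μ, 0 ≤ X ω)
    (hX : MemLp X 2 μ) :
    log (1 + μ[X] / c) - ∫ ω, log (1 + X ω / c) ∂μ ≤
      √(Var[X; μ]) * √(Var[fun ω => (c + X ω)⁻¹; μ]) := by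
  set g : Ω → ℝ := fun ω => (c + X ω)⁻¹
  have hq : 0 ≤ μ[X] := integral_nonneg_of_ae hX0
  have hlog := integrable_log_one_add_div hc hX0 (hX.integrable one_le_two)
  have hg : MemLp g 2 μ := by
    refine MemLp.of_bound (hX.aemeasurable.const_add c).inv.aestronglyMeasurable c⁻¹ ?_
    filter_upwards [hX0] with ω hω
    rw [norm_of_nonneg (by positivity)]
    exact inv_anti₀ hc (by linarith)
  have hXg : Integrable (fun ω => (μ[X] - X ω) * g ω) μ :=
    ((memLp_const _).sub hX).integrable_mul hg
  have tangent : ∀ᵐ ω ∂μ, log (1 + μ[X] / c) - log (1 + X ω / c) ≤ (μ[X] - X ω) * g ω := by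
    filter_upwards [hX0] with ω hω
    rw [← div_eq_mul_inv]
    exact log_one_add_div_sub_log_le hc (by linarith) (by linarith)
  have hmean : ∫ ω, (μ[X] - X ω) * g ω ∂μ = -cov[X, g; μ] := by
    rw [covariance_eq_sub hX hg]
    simp_rw [sub_mul]
    have hprod : Integrable (fun ω => X ω * g ω) μ := hX.integrable_mul hg
    rw [integral_sub ((hg.integrable one_le_two).const_mul _) hprod, integral_const_mul]
    simp only [Pi.mul_apply]
    ring
  calc log (1 + μ[X] / c) - ∫ ω, log (1 + X ω / c) ∂μ
      = ∫ ω, (log (1 + μ[X] / c) - log (1 + X ω / c)) ∂μ := by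
        rw [integral_sub (integrable_const _) hlog]
        simp
    _ ≤ ∫ ω, (μ[X] - X ω) * g ω ∂μ := integral_mono_ae ((integrable_const _).sub hlog) hXg tangent
    _ = -cov[X, g; μ] := hmean
    _ ≤ √(Var[X; μ]) * √(Var[g; μ]) :=
        (neg_le_abs _).trans (abs_covariance_le_sqrt_variance_mul hX hg)

end LogGap

theorem stmt_9 {Ω : Type*} [MeasurableSpace Ω] (μ : Measure Ω) [IsProbabilityMeasure μ]
    (L : Ω → ℝ) (hL_nonneg : ∀ᵐ ω ∂μ, 0 ≤ L ω) (hL : MemLp L 2 μ)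
    (n : ℕ) (hn : 1 ≤ n) (r : ℝ) (hr : 0 < r) :
    0 ≤ Real.log (1 + (μ[L]) / (n * r)) - μ[fun ω => Real.log (1 + L ω / (n * r))] ∧
      Real.log (1 + (μ[L]) / (n * r)) - μ[fun ω => Real.log (1 + L ω / (n * r))] ≤
        Real.sqrt (variance L μ) *
          Real.sqrt (variance (fun ω => ((n : ℝ) * r + L ω)⁻¹) μ) := by
  have hc : 0 < (n : ℝ) * r := mul_pos (by exact_mod_cast hn) hr
  exact ⟨sub_nonneg.2 (integral_log_one_add_div_le hc hL_nonneg (hL.integrable one_le_two)),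
    log_one_add_div_sub_integral_le hc hL_nonneg hL⟩
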